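/- If 0 < μ ≤ μ_ℝ = π√3/2, then the infimum of E(u) = (1/2)‖u'‖_{L^2(ℝ)}² − (1/6)‖u‖_{L^6(ℝ)}⁶ over all u ∈ H^1(ℝ) with ‖u‖_{L^2(ℝ)}² = μ equals 0. -/

import Mathlib

/-! With `μ = ∫ u²`, the sharp Gagliardo–Nirenberg inequality `π² ∫ u⁶ ≤ 4 μ² ∫ u'²` makes the
energy nonnegative as soon as `4 μ² ≤ 3 π²`. It follows, for every `κ < π / μ`, from a bounded
solution `c` of the Riccati equation `c' = -(1 + c²) κ u²`, and then `κ → π / μ`. Conversely, the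
mass-preserving dilation `√t u(t x)` multiplies the energy by `t²`, which tends to `0`. -/

open MeasureTheory Real Set Filter Topology

theorem hasDerivAt_integral_Iic {E : Type*} [NormedAddCommGroup E] [NormedSpace ℝ E]
    [CompleteSpace E] {f : ℝ → E} (hc : Continuous f) (hi : Integrable f) (x : ℝ) :
    HasDerivAt (fun y => ∫ z in Iic y, f z) (f x) x := by
  have hsplit : ∀ y : ℝ, ∫ z in Iic y, f z = (∫ z in Iic (0 : ℝ), f z) + ∫ z in (0 : ℝ)..y, f z :=
    fun y => (add_sub_cancel _ _).symm.trans
      (congrArg _ (intervalIntegral.integral_Iic_sub_Iic hi.integrableOn hi.integrableOn))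
  rw [funext hsplit]
  exact (hc.integral_hasStrictDerivAt 0 x).hasDerivAt.const_add _

theorem HasDerivAt.cos_div_sin {θ : ℝ → ℝ} {θ' x : ℝ} (h : HasDerivAt θ θ' x)
    (hs : Real.sin (θ x) ≠ 0) :
    HasDerivAt (fun y => Real.cos (θ y) / Real.sin (θ y))
      (-(1 + (Real.cos (θ x) / Real.sin (θ x)) ^ 2) * θ') x := by
  refine (h.cos.div h.sin hs).congr_deriv ?_
  field_simp
  ring

theorem sin_le_sin_of_le_of_le_pi_sub {β θ : ℝ} (hβ0 : 0 < β) (hβ : β ≤ π / 2) (h1 : β ≤ θ)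
    (h2 : θ ≤ π - β) : sin β ≤ sin θ := by
  rcases le_total θ (π / 2) with h | h
  · exact strictMonoOn_sin.monotoneOn ⟨by linarith, by linarith⟩ ⟨by linarith, h⟩ h1
  · rw [← sin_pi_sub θ]
    exact strictMonoOn_sin.monotoneOn ⟨by linarith, by linarith⟩ ⟨by linarith, by linarith⟩
      (by linarith)

/-- The solution is `cot (∫_{-∞}^x ρ + β)`, whose argument stays in `[β, π - β]`. -/
theorem exists_bounded_riccati_solution {ρ : ℝ → ℝ} (hρ : Continuous ρ) (hρi : Integrable ρ)
    (hρ0 : ∀ x, 0 ≤ ρ x) (hρπ : ∫ x, ρ x < π) :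
    ∃ c : ℝ → ℝ, ∃ C : ℝ, (∀ x, HasDerivAt c (-(1 + c x ^ 2) * ρ x) x) ∧ ∀ x, |c x| ≤ C := by
  set β := (π - ∫ x, ρ x) / 2 with hβ
  set θ := fun x => (∫ y in Iic x, ρ y) + β with hθdef
  have hθ : ∀ x, HasDerivAt θ (ρ x) x := fun x =>
    (hasDerivAt_integral_Iic hρ hρi x).add_const β
  have hρ_nonneg : 0 ≤ ∫ x, ρ x := integral_nonneg hρ0
  have hβ0 : 0 < β := by linarith [hβ]
  have hθβ : ∀ x, β ≤ θ x ∧ θ x ≤ π - β := fun x => by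
    have h0 : 0 ≤ ∫ y in Iic x, ρ y := setIntegral_nonneg measurableSet_Iic fun y _ => hρ0 y
    have h1 : ∫ y in Iic x, ρ y ≤ ∫ y, ρ y := setIntegral_le_integral hρi (ae_of_all _ hρ0)
    constructor <;> simp only [hθdef] <;> linarith [hβ]
  have hsin : ∀ x, sin β ≤ sin (θ x) := fun x =>
    sin_le_sin_of_le_of_le_pi_sub hβ0 (by linarith [hβ]) (hθβ x).1 (hθβ x).2
  have hsinβ : 0 < sin β := sin_pos_of_pos_of_lt_pi hβ0 (by linarith [hβ])
  refine ⟨fun x => cos (θ x) / sin (θ x), 1 / sin β,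
    fun x => (hθ x).cos_div_sin (hsinβ.trans_le (hsin x)).ne', fun x => ?_⟩
  rw [abs_div, abs_of_pos (hsinβ.trans_le (hsin x))]
  exact div_le_div₀ zero_le_one (abs_cos_le_one _) hsinβ (hsin x)

theorem integrable_mul_of_integrable_sq {α : Type*} [MeasurableSpace α] {μ : Measure α}
    {f g : α → ℝ} (hf : AEStronglyMeasurable f μ) (hg : AEStronglyMeasurable g μ)
    (hf2 : Integrable (fun x => f x ^ 2) μ) (hg2 : Integrable (fun x => g x ^ 2) μ) :
    Integrable (fun x => f x * g x) μ :=
  ((memLp_two_iff_integrable_sq hf).2 hf2).integrable_mul ((memLp_two_iff_integrable_sq hg).2 hg2)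

section GagliardoNirenberg

variable {u u' : ℝ → ℝ}

/-- Integrate `(u⁴ c)' = 4 u³ u' c - κ (1 + c²) u⁶` over `ℝ` and bound
`4 u³ u' c ≤ 4 u'² / κ + κ c² u⁶`. -/
theorem sq_mul_integral_pow_six_le_of_riccati {c : ℝ → ℝ} {κ C : ℝ} (hκ : 0 < κ)
    (hu : ∀ x, HasDerivAt u (u' x) x) (h2 : Integrable fun x => u x ^ 2)
    (h2' : Integrable fun x => u' x ^ 2) (h6 : Integrable fun x => u x ^ 6)
    (hc : ∀ x, HasDerivAt c (-(1 + c x ^ 2) * (κ * u x ^ 2)) x) (hcC : ∀ x, |c x| ≤ C) :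
    κ ^ 2 * ∫ x, u x ^ 6 ≤ 4 * ∫ x, u' x ^ 2 := by
  have hu_cont : Continuous u := continuous_iff_continuousAt.2 fun x => (hu x).continuousAt
  have hc_cont : Continuous c := continuous_iff_continuousAt.2 fun x => (hc x).continuousAt
  have hu'_meas : AEStronglyMeasurable u' := by
    rw [show u' = deriv u from funext fun x => (hu x).deriv.symm]
    exact (measurable_deriv u).aestronglyMeasurable
  have h4 : Integrable fun x => u x * u x ^ 3 :=
    integrable_mul_of_integrable_sq hu_cont.aestronglyMeasurable
      (hu_cont.pow 3).aestronglyMeasurable h2 (by simpa only [← pow_mul] using h6)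
  have h31 : Integrable fun x => u x ^ 3 * u' x :=
    integrable_mul_of_integrable_sq (hu_cont.pow 3).aestronglyMeasurable hu'_meas
      (by simpa only [← pow_mul] using h6) h2'
  set G' := fun x => 4 * (u x ^ 3 * u' x * c x) - κ * (u x ^ 6 * (1 + c x ^ 2))
  have hG : ∀ x, HasDerivAt (fun x => u x * u x ^ 3 * c x) (G' x) x := fun x => by
    refine (((hu x).mul ((hu x).pow 3)).mul (hc x)).congr_deriv ?_
    simp only [G', Pi.mul_apply, Pi.pow_apply]
    ring
  have hc_bdd : ∀ᵐ x, ‖c x‖ ≤ C := ae_of_all _ hcC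
  have hc2_bdd : ∀ᵐ x, ‖1 + c x ^ 2‖ ≤ 1 + C ^ 2 := ae_of_all _ fun x => by
    rw [norm_of_nonneg (by positivity), add_le_add_iff_left, ← sq_abs]
    exact pow_le_pow_left₀ (abs_nonneg _) (hcC x) 2
  have hGi : Integrable fun x => u x * u x ^ 3 * c x :=
    h4.mul_bdd hc_cont.aestronglyMeasurable hc_bdd
  have hG'i : Integrable G' :=
    ((h31.mul_bdd hc_cont.aestronglyMeasurable hc_bdd).const_mul 4).sub
      ((h6.mul_bdd (by fun_prop) hc2_bdd).const_mul κ)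
  have hamgm : ∀ x, G' x ≤ 4 / κ * u' x ^ 2 - κ * u x ^ 6 := fun x => by
    have : 0 ≤ (2 * u' x - κ * u x ^ 3 * c x) ^ 2 / κ := by positivity
    simp only [G']
    field_simp at this ⊢
    nlinarith [this]
  have hint := integral_mono (g := fun x => 4 / κ * u' x ^ 2 - κ * u x ^ 6) hG'i
    ((h2'.const_mul _).sub (h6.const_mul _)) hamgm
  rw [integral_eq_zero_of_hasDerivAt_of_integrable hG hG'i hGi, integral_sub (h2'.const_mul _)
    (h6.const_mul _), integral_const_mul, integral_const_mul] at hint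
  rw [sub_nonneg, div_mul_eq_mul_div, le_div_iff₀ hκ] at hint
  linarith

theorem sq_mul_integral_pow_six_le {κ : ℝ} (hκ : 0 < κ) (hu : ∀ x, HasDerivAt u (u' x) x)
    (h2 : Integrable fun x => u x ^ 2) (h2' : Integrable fun x => u' x ^ 2)
    (h6 : Integrable fun x => u x ^ 6) (hκu : κ * ∫ x, u x ^ 2 < π) :
    κ ^ 2 * ∫ x, u x ^ 6 ≤ 4 * ∫ x, u' x ^ 2 := by
  have hu_cont : Continuous u := continuous_iff_continuousAt.2 fun x => (hu x).continuousAt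
  obtain ⟨c, C, hc, hcC⟩ := exists_bounded_riccati_solution (ρ := fun x => κ * u x ^ 2)
    (by fun_prop) (h2.const_mul κ) (fun x => by positivity) (by rwa [integral_const_mul])
  exact sq_mul_integral_pow_six_le_of_riccati hκ hu h2 h2' h6 hc hcC

theorem pi_sq_mul_integral_pow_six_le (hu : ∀ x, HasDerivAt u (u' x) x)
    (h2 : Integrable fun x => u x ^ 2) (h2' : Integrable fun x => u' x ^ 2)
    (h6 : Integrable fun x => u x ^ 6) (hm : 0 < ∫ x, u x ^ 2) :
    π ^ 2 * ∫ x, u x ^ 6 ≤ 4 * (∫ x, u x ^ 2) ^ 2 * ∫ x, u' x ^ 2 := by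
  set m := ∫ x, u x ^ 2
  have hlim : (π / m) ^ 2 * ∫ x, u x ^ 6 ≤ 4 * ∫ x, u' x ^ 2 := by
    refine le_of_tendsto (x := 𝓝[<] (π / m))
      (((continuous_pow 2).mul continuous_const).tendsto (π / m) |>.mono_left nhdsWithin_le_nhds) ?_
    filter_upwards [Ioo_mem_nhdsLT (div_pos pi_pos hm)] with κ hκ
    exact sq_mul_integral_pow_six_le hκ.1 hu h2 h2' h6 (by rw [← lt_div_iff₀ hm]; exact hκ.2)
  calc π ^ 2 * ∫ x, u x ^ 6 = m ^ 2 * ((π / m) ^ 2 * ∫ x, u x ^ 6) := by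
        field_simp
    _ ≤ m ^ 2 * (4 * ∫ x, u' x ^ 2) := by gcongr
    _ = 4 * m ^ 2 * ∫ x, u' x ^ 2 := by ring

end GagliardoNirenberg

theorem integral_mul_comp_mul_left_pow (f : ℝ → ℝ) (a b : ℝ) (n : ℕ) :
    ∫ x, (a * f (b * x)) ^ n = a ^ n * |b⁻¹| * ∫ x, f x ^ n := by
  simp only [mul_pow, integral_const_mul, Measure.integral_comp_mul_left (fun y => f y ^ n),
    smul_eq_mul, mul_assoc]

theorem MeasureTheory.Integrable.mul_comp_mul_left_pow {f : ℝ → ℝ} {n : ℕ}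
    (hf : Integrable fun x => f x ^ n) (a : ℝ) {b : ℝ} (hb : b ≠ 0) :
    Integrable fun x => (a * f (b * x)) ^ n := by
  simpa only [mul_pow] using (hf.comp_mul_left' hb).const_mul (a ^ n)

theorem exists_dilation {u u' : ℝ → ℝ} (hu : ∀ x, HasDerivAt u (u' x) x)
    (h2 : Integrable fun x => u x ^ 2) (h2' : Integrable fun x => u' x ^ 2)
    (h6 : Integrable fun x => u x ^ 6) {t : ℝ} (ht : 0 < t) :
    ∃ v v' : ℝ → ℝ, (∀ x, HasDerivAt v (v' x) x) ∧
      Integrable (fun x => v x ^ 2) ∧ Integrable (fun x => v' x ^ 2) ∧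
      Integrable (fun x => v x ^ 6) ∧ ∫ x, v x ^ 2 = ∫ x, u x ^ 2 ∧
      ∫ x, v' x ^ 2 = t ^ 2 * ∫ x, u' x ^ 2 ∧ ∫ x, v x ^ 6 = t ^ 2 * ∫ x, u x ^ 6 := by
  have hsqrt : √t ^ 2 = t := sq_sqrt ht.le
  have hsqrt6 : √t ^ 6 = t ^ 3 := by rw [show 6 = 2 * 3 from rfl, pow_mul, hsqrt]
  refine ⟨fun x => √t * u (t * x), fun x => t * √t * u' (t * x), fun x => ?_,
    h2.mul_comp_mul_left_pow _ ht.ne', h2'.mul_comp_mul_left_pow _ ht.ne',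
    h6.mul_comp_mul_left_pow _ ht.ne', ?_, ?_, ?_⟩
  · refine (((hu (t * x)).comp x ((hasDerivAt_id x).const_mul t)).const_mul √t).congr_deriv ?_
    ring
  all_goals
    rw [integral_mul_comp_mul_left_pow, abs_of_pos (inv_pos.2 ht)]
    field_simp
    simp only [hsqrt, hsqrt6]

theorem exists_gaussian_of_integral_sq_eq {μ : ℝ} (hμ : 0 ≤ μ) :
    ∃ u u' : ℝ → ℝ, (∀ x, HasDerivAt u (u' x) x) ∧
      Integrable (fun x => u x ^ 2) ∧ Integrable (fun x => u' x ^ 2) ∧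
      Integrable (fun x => u x ^ 6) ∧ ∫ x, u x ^ 2 = μ := by
  set a := √(μ / √(π / 2))
  have hpow : ∀ (n : ℕ) (x : ℝ), (a * exp (-x ^ 2)) ^ n = a ^ n * exp (-n * x ^ 2) :=
    fun n x => by rw [mul_pow, ← exp_nat_mul]; ring_nf
  have hintegrable : ∀ n : ℕ, 0 < n → Integrable fun x => (a * exp (-x ^ 2)) ^ n := fun n hn => by
    simp_rw [hpow]
    exact (integrable_exp_neg_mul_sq (Nat.cast_pos.2 hn)).const_mul _
  refine ⟨fun x => a * exp (-x ^ 2), fun x => a * (-(2 * x) * exp (-x ^ 2)), fun x => ?_,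
    hintegrable 2 two_pos, ?_, hintegrable 6 (by norm_num), ?_⟩
  · exact (((hasDerivAt_pow 2 x).neg.exp).const_mul a).congr_deriv
      (by simp only [Pi.neg_apply]; ring)
  · have h := (integrable_rpow_mul_exp_neg_mul_sq two_pos (s := 2) (by norm_num)).const_mul
      (4 * a ^ 2)
    refine h.congr (ae_of_all _ fun x => ?_)
    simp only [rpow_two]
    rw [show -2 * x ^ 2 = -x ^ 2 + -x ^ 2 by ring, exp_add]
    ring
  · simp_rw [hpow, integral_const_mul, integral_gaussian]
    rw [sq_sqrt (by positivity)]
    push_cast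
    field_simp

/-- If `0 < μ ≤ μ_ℝ = π√3/2`, the infimum of the quintic NLS energy over
`H¹(ℝ)` functions of mass `μ` equals `0`. -/
theorem stmt_7 (μ : ℝ) (hμ0 : 0 < μ) (hμ : μ ≤ Real.pi * Real.sqrt 3 / 2) :
    (∀ u u' : ℝ → ℝ,
      (∀ x, HasDerivAt u (u' x) x) →
      Integrable (fun x => (u x) ^ 2) →
      Integrable (fun x => (u' x) ^ 2) →
      Integrable (fun x => (u x) ^ 6) →
      (∫ x, (u x) ^ 2) = μ →
      0 ≤ (1/2) * (∫ x, (u' x) ^ 2) - (1/6) * ∫ x, (u x) ^ 6) ∧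
    (∀ ε : ℝ, 0 < ε → ∃ u u' : ℝ → ℝ,
      (∀ x, HasDerivAt u (u' x) x) ∧
      Integrable (fun x => (u x) ^ 2) ∧
      Integrable (fun x => (u' x) ^ 2) ∧
      Integrable (fun x => (u x) ^ 6) ∧
      (∫ x, (u x) ^ 2) = μ ∧
      (1/2) * (∫ x, (u' x) ^ 2) - (1/6) * (∫ x, (u x) ^ 6) < ε) := by
  refine ⟨fun u u' hu h2 h2' h6 hm => ?_, fun ε hε => ?_⟩
  · have hGN := pi_sq_mul_integral_pow_six_le hu h2 h2' h6 (hm ▸ hμ0)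
    rw [hm] at hGN
    have hμsq : 4 * μ ^ 2 ≤ 3 * π ^ 2 := by
      have := pow_le_pow_left₀ hμ0.le hμ 2
      rw [div_pow, mul_pow, sq_sqrt (by norm_num)] at this
      linarith
    have hK : 0 ≤ ∫ x, u' x ^ 2 := integral_nonneg fun x => sq_nonneg _
    have h6K : π ^ 2 * ∫ x, u x ^ 6 ≤ π ^ 2 * (3 * ∫ x, u' x ^ 2) := by
      nlinarith [mul_le_mul_of_nonneg_right hμsq hK]
    linarith [le_of_mul_le_mul_left h6K (by positivity)]
  · obtain ⟨u, u', hu, h2, h2', h6, hm⟩ := exists_gaussian_of_integral_sq_eq hμ0.le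
    set E := (1/2) * (∫ x, (u' x) ^ 2) - (1/6) * (∫ x, (u x) ^ 6)
    have hsmall : ∀ᶠ t in 𝓝[>] (0 : ℝ), t ^ 2 * E < ε :=
      (((continuous_pow 2).mul continuous_const).tendsto' 0 0 (by simp)).mono_left
        nhdsWithin_le_nhds |>.eventually (gt_mem_nhds hε)
    obtain ⟨t, htε, ht⟩ := (hsmall.and self_mem_nhdsWithin).exists
    obtain ⟨v, v', hv, hv2, hv2', hv6, hvm, hvK, hvI⟩ := exists_dilation hu h2 h2' h6 ht
    refine ⟨v, v', hv, hv2, hv2', hv6, hvm.trans hm, ?_⟩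
    rw [hvK, hvI]
    linear_combination htε
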